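/- arXiv:2108.03753 — 2 statements merged into one kernel-verified Lean document; each statement's English description precedes it below -/
import Mathlib

section
/- For every nonnegative integer p and every real x with |x| < 1, ∑_{n=0}^∞ n^p x^n = (1/(1-x)) · ω_p(x/(1-x)), where ω_p(x) = ∑_{k=0}^p S(p,k) k! x^k is the p-th geometric polynomial (using the convention 0^0 = 1). -/
open Finset Real

/-- Stirling numbers of the second kind. -/
def stirling2 : ℕ → ℕ → ℕ
  | 0, 0 => 1
  | 0, _ + 1 => 0
  | _ + 1, 0 => 0
  | p + 1, k + 1 => (k + 1) * stirling2 p (k + 1) + stirling2 p k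

/-- The geometric (Fubini) polynomial. -/
noncomputable def geomPoly (p : ℕ) (x : ℝ) : ℝ :=
  ∑ k ∈ Finset.range (p + 1), (stirling2 p k : ℝ) * k.factorial * x ^ k

/-!
Expanding `n ^ p = ∑ₖ S(p, k) · n(n-1)⋯(n-k+1)` in falling factorials reduces the series to the
sums `∑ₙ n(n-1)⋯(n-k+1) xⁿ = k! xᵏ / (1 - x)ᵏ⁺¹`, which are shifted binomial series; summing them
against `S(p, k)` gives `(1 / (1 - x)) · ω_p (x / (1 - x))`.
-/

theorem stirling2_eq_stirlingSecond : ∀ p k, stirling2 p k = Nat.stirlingSecond p k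
  | 0, 0 | 0, _ + 1 | _ + 1, 0 => rfl
  | p + 1, k + 1 => by
    rw [stirling2, Nat.stirlingSecond_succ_succ, stirling2_eq_stirlingSecond p (k + 1),
      stirling2_eq_stirlingSecond p k]

namespace Nat

theorem mul_descFactorial (n k : ℕ) :
    n * n.descFactorial k = n.descFactorial (k + 1) + k * n.descFactorial k := by
  rw [descFactorial_succ]
  rcases le_or_gt k n with hkn | hnk
  · rw [← add_mul, Nat.sub_add_cancel hkn]
  · simp [descFactorial_of_lt hnk]

theorem pow_eq_sum_stirlingSecond_mul_descFactorial (p n : ℕ) :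
    n ^ p = ∑ k ∈ range (p + 1), stirlingSecond p k * n.descFactorial k := by
  induction p with
  | zero => simp
  | succ p ih =>
    have shift : ∑ k ∈ range (p + 1), k * stirlingSecond p k * n.descFactorial k
        = ∑ k ∈ range (p + 1), (k + 1) * stirlingSecond p (k + 1) * n.descFactorial (k + 1) := by
      rw [sum_range_succ', sum_range_succ _ p, stirlingSecond_eq_zero_of_lt (lt_add_one p)]
      simp
    calc n ^ (p + 1) = ∑ k ∈ range (p + 1), stirlingSecond p k * (n * n.descFactorial k) := by
          rw [pow_succ', ih, mul_sum]
          exact sum_congr rfl fun k _ ↦ mul_left_comm _ _ _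
      _ = ∑ k ∈ range (p + 1), stirlingSecond p k * n.descFactorial (k + 1)
          + ∑ k ∈ range (p + 1), k * stirlingSecond p k * n.descFactorial k := by
          rw [← sum_add_distrib]
          refine sum_congr rfl fun k _ ↦ ?_
          rw [mul_descFactorial]
          ring
      _ = ∑ k ∈ range (p + 1), stirlingSecond (p + 1) (k + 1) * n.descFactorial (k + 1) := by
          rw [shift, ← sum_add_distrib]
          refine sum_congr rfl fun k _ ↦ ?_
          rw [stirlingSecond_succ_succ]
          ring
      _ = ∑ k ∈ range (p + 2), stirlingSecond (p + 1) k * n.descFactorial k := by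
          simp [sum_range_succ' _ (p + 1)]

end Nat

section Geometric

open scoped Nat

variable {𝕜 : Type*} [NormedField 𝕜] {r : 𝕜}

theorem hasSum_descFactorial_mul_geometric_of_norm_lt_one (k : ℕ) (hr : ‖r‖ < 1) :
    HasSum (fun n : ℕ ↦ (n.descFactorial k : 𝕜) * r ^ n) (k ! * r ^ k / (1 - r) ^ (k + 1)) := by
  have hshift : HasSum (fun n ↦ ((n + k).descFactorial k : 𝕜) * r ^ (n + k))
      (k ! * r ^ k / (1 - r) ^ (k + 1)) := by
    have h := (hasSum_choose_mul_geometric_of_norm_lt_one k hr).mul_left ((k ! : 𝕜) * r ^ k)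
    rw [mul_one_div] at h
    refine h.congr_fun fun n ↦ ?_
    rw [Nat.add_comm, Nat.descFactorial_eq_factorial_mul_choose, pow_add]
    push_cast
    ring
  refine (Function.Injective.hasSum_iff (add_left_injective k) fun n hn ↦ ?_).mp hshift
  have hnk : n < k := by
    by_contra! h
    exact hn ⟨n - k, Nat.sub_add_cancel h⟩
  simp [Nat.descFactorial_of_lt hnk]

theorem hasSum_pow_mul_geometric_of_norm_lt_one (p : ℕ) (hr : ‖r‖ < 1) :
    HasSum (fun n : ℕ ↦ (n : 𝕜) ^ p * r ^ n)
      (∑ k ∈ range (p + 1), (Nat.stirlingSecond p k : 𝕜) * (k ! * r ^ k / (1 - r) ^ (k + 1))) := by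
  refine (hasSum_sum fun k _ ↦
    (hasSum_descFactorial_mul_geometric_of_norm_lt_one k hr).mul_left _).congr_fun fun n ↦ ?_
  rw [← Nat.cast_pow, Nat.pow_eq_sum_stirlingSecond_mul_descFactorial, Nat.cast_sum, sum_mul]
  push_cast
  exact sum_congr rfl fun k _ ↦ mul_assoc _ _ _

end Geometric

theorem stmt_11 (p : ℕ) (x : ℝ) (hx : |x| < 1) :
    ∑' n : ℕ, (n : ℝ) ^ p * x ^ n = (1 / (1 - x)) * geomPoly p (x / (1 - x)) := by
  have hx1 : 1 - x ≠ 0 := by linarith [(abs_lt.mp hx).2]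
  rw [(hasSum_pow_mul_geometric_of_norm_lt_one p (by rwa [Real.norm_eq_abs])).tsum_eq, geomPoly,
    mul_sum]
  refine sum_congr rfl fun k _ ↦ ?_
  rw [stirling2_eq_stirlingSecond, div_pow]
  field_simp
  ring
end

section
/- For every positive integer p and every real x with |x| < 1, ∑_{n=1}^∞ (1^p + 2^p + ⋯ + n^p) x^n = (1/(1-x)²) · ω_p(x/(1-x)), where ω_p(x) = ∑_{k=0}^p S(p,k) k! x^k. -/
open Finset Real

/-! Expanding `k ^ p = ∑ⱼ S(p,j) j! C(k,j)` and summing over `k ≤ m` with the hockey-stick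
identity gives `1ᵖ + ⋯ + mᵖ = ∑ⱼ S(p,j) j! C(m+1,j+1)`. Since
`∑ₘ C(m+1,j+1) xᵐ = xʲ / (1-x)^(j+2)`, the generating function is
`∑ⱼ S(p,j) j! xʲ / (1-x)^(j+2) = ω_p(x/(1-x)) / (1-x)²`. -/

open Nat

lemma stirling2_eq_stirlingSecond_s12 : stirling2 = stirlingSecond := by
  funext p k
  induction p generalizing k with
  | zero => cases k <;> rfl
  | succ p ih => cases k <;> simp [stirling2, stirlingSecond_succ_succ, ih]

lemma Nat.self_mul_choose (n k : ℕ) :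
    n * n.choose k = (k + 1) * n.choose (k + 1) + k * n.choose k := by
  rcases le_or_gt k n with hkn | hnk
  · rw [mul_comm (k + 1), Nat.choose_succ_right_eq]
    calc n * n.choose k = (n - k + k) * n.choose k := by rw [Nat.sub_add_cancel hkn]
      _ = _ := by ring
  · simp [Nat.choose_eq_zero_of_lt hnk, Nat.choose_eq_zero_of_lt (hnk.trans k.lt_succ_self)]

lemma Nat.pow_eq_sum_stirlingSecond_mul_choose (p n : ℕ) :
    n ^ p = ∑ k ∈ range (p + 1), stirlingSecond p k * k ! * n.choose k := by
  induction p with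
  | zero => simp
  | succ p ih =>
    have hshift : ∑ k ∈ range (p + 1), stirlingSecond p k * k ! * (k * n.choose k)
        = ∑ k ∈ range (p + 1),
            (k + 1) * stirlingSecond p (k + 1) * (k + 1)! * n.choose (k + 1) := by
      rw [sum_range_succ', sum_range_succ, stirlingSecond_eq_zero_of_lt p.lt_succ_self]
      simp only [zero_mul, mul_zero, add_zero, factorial_succ]
      exact sum_congr rfl fun k _ => by ring
    calc n ^ (p + 1) = ∑ k ∈ range (p + 1), stirlingSecond p k * k ! * (n * n.choose k) := by
          rw [pow_succ, ih, sum_mul]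
          exact sum_congr rfl fun k _ => by ring
      _ = ∑ k ∈ range (p + 1), ((k + 1) * stirlingSecond p (k + 1) + stirlingSecond p k)
            * (k + 1)! * n.choose (k + 1) := by
          simp only [Nat.self_mul_choose, mul_add, sum_add_distrib, hshift, factorial_succ]
          rw [← sum_add_distrib]
          exact sum_congr rfl fun k _ => by ring
      _ = _ := by
          rw [sum_range_succ' _ (p + 1)]
          simp [stirlingSecond_succ_succ]

lemma Nat.sum_range_pow_eq_sum_stirlingSecond (p m : ℕ) :
    ∑ k ∈ range (m + 1), k ^ p
      = ∑ j ∈ range (p + 1), stirlingSecond p j * j ! * (m + 1).choose (j + 1) := by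
  simp only [Nat.pow_eq_sum_stirlingSecond_mul_choose p]
  rw [sum_comm]
  refine sum_congr rfl fun j _ => ?_
  rw [← mul_sum, ← sum_Icc_choose]
  congr 1
  refine (sum_subset (fun k hk => ?_) (fun k _ hk => ?_)).symm
  · simp only [mem_Icc, mem_range] at hk ⊢; omega
  · exact choose_eq_zero_of_lt (by simp_all)

lemma Nat.sum_Icc_pow_eq_sum_stirlingSecond {p : ℕ} (hp : 0 < p) (m : ℕ) :
    ∑ k ∈ Icc 1 m, k ^ p
      = ∑ j ∈ range (p + 1), stirlingSecond p j * j ! * (m + 1).choose (j + 1) := by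
  rw [← sum_range_pow_eq_sum_stirlingSecond, range_eq_Ico,
    sum_eq_sum_Ico_succ_bot (by omega : 0 < m + 1),
    zero_pow hp.ne', zero_add, Ico_add_one_right_eq_Icc]

lemma hasSum_choose_succ_mul_geometric {𝕜 : Type*} [NormedDivisionRing 𝕜] (k : ℕ) {r : 𝕜}
    (hr : ‖r‖ < 1) :
    HasSum (fun n ↦ ((n + 1).choose (k + 1) : 𝕜) * r ^ n) (r ^ k / (1 - r) ^ (k + 2)) := by
  rw [← hasSum_nat_add_iff' k]
  have hlow : ∑ i ∈ range k, ((i + 1).choose (k + 1) : 𝕜) * r ^ i = 0 :=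
    sum_eq_zero fun i hi => by
      rw [Nat.choose_eq_zero_of_lt (by simp at hi; omega), Nat.cast_zero, zero_mul]
  rw [hlow, sub_zero, div_eq_mul_one_div]
  have hterm : ∀ n : ℕ, ((n + k + 1).choose (k + 1) : 𝕜) * r ^ (n + k)
      = r ^ k * (((n + (k + 1)).choose (k + 1) : 𝕜) * r ^ n) := fun n => by
    rw [← add_assoc, pow_add, pow_mul_comm, ← mul_assoc, ← mul_assoc,
      (Nat.cast_commute _ (r ^ k)).eq]
  simpa only [hterm] using
    (hasSum_choose_mul_geometric_of_norm_lt_one (k + 1) hr).mul_left (r ^ k)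

lemma one_div_one_sub_sq_mul_geomPoly {x : ℝ} (hx : x ≠ 1) (p : ℕ) :
    1 / (1 - x) ^ 2 * geomPoly p (x / (1 - x))
      = ∑ j ∈ range (p + 1),
          (stirlingSecond p j * j ! : ℝ) * (x ^ j / (1 - x) ^ (j + 2)) := by
  have hx' : 1 - x ≠ 0 := sub_ne_zero.mpr hx.symm
  rw [geomPoly, stirling2_eq_stirlingSecond_s12, mul_sum]
  refine sum_congr rfl fun j _ => ?_
  rw [div_pow, pow_add]
  field_simp

lemma hasSum_sum_Icc_pow_mul_geometric {p : ℕ} (hp : 0 < p) {x : ℝ} (hx : ‖x‖ < 1) :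
    HasSum (fun m : ℕ ↦ (∑ k ∈ Icc 1 m, (k : ℝ) ^ p) * x ^ m)
      (1 / (1 - x) ^ 2 * geomPoly p (x / (1 - x))) := by
  have hcoeff : ∀ m : ℕ, (∑ k ∈ Icc 1 m, (k : ℝ) ^ p) * x ^ m
      = ∑ j ∈ range (p + 1),
          (stirlingSecond p j * j ! : ℝ) * ((m + 1).choose (j + 1) * x ^ m) := by
    intro m
    simp only [← mul_assoc, ← sum_mul]
    congr 1
    exact_mod_cast Nat.sum_Icc_pow_eq_sum_stirlingSecond hp m
  simp only [hcoeff, one_div_one_sub_sq_mul_geomPoly (lt_of_abs_lt hx).ne]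
  exact hasSum_sum fun j _ ↦ (hasSum_choose_succ_mul_geometric j hx).mul_left _

theorem stmt_12 (p : ℕ) (hp : 0 < p) (x : ℝ) (hx : |x| < 1) :
    ∑' n : ℕ, (∑ k ∈ Finset.Icc 1 (n + 1), (k : ℝ) ^ p) * x ^ (n + 1)
      = (1 / (1 - x) ^ 2) * geomPoly p (x / (1 - x)) := by
  have h := (hasSum_nat_add_iff' 1).mpr (hasSum_sum_Icc_pow_mul_geometric hp (x := x) hx)
  simpa using h.tsum_eq
end
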